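/- arXiv:1706.08120 — 2 statements merged into one kernel-verified Lean document; each statement's English description precedes it below -/
import Mathlib

section
/- For every N ≥ 0 and every multi-index γ there is a constant C such that for all j ≥ 1, all l ∈ ℤⁿ with 2^j ≤ l_i ≤ 2^{j+1} for each i, and all x ∈ ℝⁿ with |x - (3/2)·(1,…,1)|² ≥ 4n, one has |x - (3/2)·(1,…,1)|^{2N} · |(2^j x - l)^γ| · exp(-|2^j x - l|²) ≤ C · 2^{-j(2N+n+2)}. -/
/-!
Put `p = 2^j`, `S = |x - 3/2·𝟙|²` and `T = |p x - l|²`. Since `p ≤ lᵢ ≤ 2p`, each coordinate of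
`p (x - 3/2·𝟙)` is within `p/2` of `p xᵢ - lᵢ`, so `p² S ≤ 2T + n p²/2`; on the region `S ≥ 4n` this
gives `p² S ≤ (16/7) T` and in particular `T ≥ p`. Hence `p^(2N+n+2) S^N |(p x - l)^γ|` is at most a
constant times a power of `1 + T`, which `exp (-T)` absorbs.
-/

open Real

lemma one_add_pow_mul_exp_neg_le (M : ℕ) {t : ℝ} (ht : -1 ≤ t) :
    (1 + t) ^ M * exp (-t) ≤ M.factorial * exp 1 := by
  have h := pow_div_factorial_le_exp (x := 1 + t) (by linarith) M
  rw [div_le_iff₀ (by positivity)] at h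
  calc (1 + t) ^ M * exp (-t) ≤ exp (1 + t) * M.factorial * exp (-t) := by gcongr
    _ = M.factorial * exp 1 := by rw [mul_right_comm, ← exp_add]; ring_nf

lemma sq_mul_sub_three_halves_le {p l : ℝ} (x : ℝ) (hpl : p ≤ l) (hlp : l ≤ 2 * p) :
    p ^ 2 * (x - 3 / 2) ^ 2 ≤ 2 * (p * x - l) ^ 2 + p ^ 2 / 2 := by
  nlinarith [sq_nonneg (p * x - l - (l - 3 * p / 2)), mul_nonneg (sub_nonneg.2 hpl) (sub_nonneg.2 hlp)]

section Sums

variable {ι : Type*} [Fintype ι]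

lemma abs_prod_pow_le_one_add_sum_sq_pow (y : ι → ℝ) (γ : ι → ℕ) :
    |∏ i, y i ^ γ i| ≤ (1 + ∑ i, y i ^ 2) ^ ∑ i, γ i := by
  have hy : ∀ i, |y i| ≤ 1 + ∑ i, y i ^ 2 := fun i ↦ by
    have := Finset.single_le_sum (fun k _ ↦ sq_nonneg (y k)) (Finset.mem_univ i)
    nlinarith [sq_abs (y i), sq_nonneg (|y i| - 1)]
  rw [Finset.abs_prod, ← Finset.prod_pow_eq_pow_sum]
  gcongr with i
  rw [abs_pow]
  exact pow_le_pow_left₀ (abs_nonneg _) (hy i) _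

lemma mul_sum_sq_sub_three_halves_le {p : ℝ} {l : ι → ℝ} (x : ι → ℝ)
    (hl : ∀ i, p ≤ l i ∧ l i ≤ 2 * p) (hx : 4 * (Fintype.card ι : ℝ) ≤ ∑ i, (x i - 3 / 2) ^ 2) :
    7 * (p ^ 2 * ∑ i, (x i - 3 / 2) ^ 2) ≤ 16 * ∑ i, (p * x i - l i) ^ 2 := by
  have hsum : p ^ 2 * ∑ i, (x i - 3 / 2) ^ 2 ≤
      2 * ∑ i, (p * x i - l i) ^ 2 + Fintype.card ι * (p ^ 2 / 2) := by
    rw [Finset.mul_sum, Finset.mul_sum, ← Finset.card_univ, ← nsmul_eq_mul, ← Finset.sum_const,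
      ← Finset.sum_add_distrib]
    exact Finset.sum_le_sum fun i _ ↦ sq_mul_sub_three_halves_le (x i) (hl i).1 (hl i).2
  nlinarith [mul_le_mul_of_nonneg_left hx (sq_nonneg p)]

end Sums

lemma pow_mul_pow_mul_one_add_pow_le {p S T : ℝ} (N G k : ℕ) (hp : 0 ≤ p) (hS : 0 ≤ S)
    (hT : 0 ≤ T) (hST : 7 * (p ^ 2 * S) ≤ 16 * T) (hpT : p ≤ 1 + T) :
    p ^ (2 * N + k) * (S ^ N * (1 + T) ^ G) ≤ (16 / 7) ^ N * (1 + T) ^ (N + G + k) := by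
  calc p ^ (2 * N + k) * (S ^ N * (1 + T) ^ G) = (p ^ 2 * S) ^ N * p ^ k * (1 + T) ^ G := by ring
    _ ≤ (16 / 7 * (1 + T)) ^ N * (1 + T) ^ k * (1 + T) ^ G := by
        gcongr ?_ ^ N * ?_ ^ k * _
        linarith
    _ = (16 / 7) ^ N * (1 + T) ^ (N + G + k) := by rw [mul_pow, pow_add, pow_add]; ring

theorem schwartz_decay_estimate (n : ℕ) (hn : 1 ≤ n) (N : ℕ) (γ : Fin n → ℕ) :
    ∃ C : ℝ, ∀ j : ℕ, 1 ≤ j → ∀ l : Fin n → ℤ,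
      (∀ i, (2 : ℤ) ^ j ≤ l i ∧ l i ≤ 2 ^ (j + 1)) →
      ∀ x : Fin n → ℝ, 4 * (n : ℝ) ≤ ∑ i, (x i - 3 / 2) ^ 2 →
        (∑ i, (x i - 3 / 2) ^ 2) ^ N *
            |∏ i, ((2 : ℝ) ^ j * x i - (l i : ℝ)) ^ (γ i)| *
            Real.exp (-(∑ i, ((2 : ℝ) ^ j * x i - (l i : ℝ)) ^ 2)) ≤
          C * (2 : ℝ) ^ (-((j : ℤ) * (2 * N + n + 2))) := by
  refine ⟨(16 / 7) ^ N * ((N + ∑ i, γ i + (n + 2)).factorial * exp 1), ?_⟩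
  intro j _ l hl x hx
  have hpl : ∀ i, (2 : ℝ) ^ j ≤ l i ∧ (l i : ℝ) ≤ 2 * 2 ^ j := fun i ↦
    ⟨by exact_mod_cast (hl i).1, by rw [← pow_succ']; exact_mod_cast (hl i).2⟩
  set p : ℝ := 2 ^ j
  set S := ∑ i, (x i - 3 / 2) ^ 2
  set T := ∑ i, (p * x i - (l i : ℝ)) ^ 2
  have hp : 1 ≤ p := one_le_pow₀ one_le_two
  have hST := mul_sum_sq_sub_three_halves_le x hpl (by simpa using hx)
  have hpT : p ≤ 1 + T := by nlinarith [show (1 : ℝ) ≤ n from mod_cast hn]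
  have hT : 0 ≤ T := by positivity
  have hRHS : (2 : ℝ) ^ (-((j : ℤ) * (2 * N + n + 2))) = (p ^ (2 * N + n + 2))⁻¹ := by
    rw [zpow_neg, ← pow_mul]; norm_cast
  rw [hRHS, ← div_eq_mul_inv, le_div_iff₀ (by positivity)]
  calc S ^ N * |∏ i, (p * x i - l i) ^ γ i| * exp (-T) * p ^ (2 * N + n + 2)
      ≤ p ^ (2 * N + (n + 2)) * (S ^ N * (1 + T) ^ ∑ i, γ i) * exp (-T) := by
        rw [mul_right_comm, mul_comm _ (p ^ _), ← add_assoc]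
        gcongr
        exact abs_prod_pow_le_one_add_sum_sq_pow _ γ
    _ ≤ (16 / 7) ^ N * (1 + T) ^ (N + ∑ i, γ i + (n + 2)) * exp (-T) := by
        gcongr ?_ * _
        exact pow_mul_pow_mul_one_add_pow_le N _ _ (by positivity) (by positivity) hT hST hpT
    _ ≤ (16 / 7) ^ N * ((N + ∑ i, γ i + (n + 2)).factorial * exp 1) := by
        rw [mul_assoc]
        gcongr _ * ?_
        exact one_add_pow_mul_exp_neg_le _ (by linarith : -1 ≤ T)
end

section
/- With W_j as above, for all x₁ > 0 and x' = (x₂,…,xₙ) ∈ ℝ^{n-1}: |W_j(s, x₁+3, x')| ≤ |W_j(s, x₁, x')|. -/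
open Real Function

theorem heat_vaguelette_translation_decay (n j : ℕ) (hn : 3 ≤ n) (hj : 1 ≤ j)
    (s : ℝ) (hs : 0 < s)
    (W : ℝ → (Fin n → ℝ) → ℝ)
    (hW : W = fun s x =>
      ∑ k ∈ Finset.Icc (fun _ : Fin n => (2 : ℤ) ^ j) (fun _ : Fin n => (2 : ℤ) ^ (j + 1)),
        (2 : ℝ) ^ j * (j : ℝ) ^ (-(1 : ℝ) / 2) *
          ((2 : ℝ) ^ j * x ⟨1, by omega⟩ - (k ⟨1, by omega⟩ : ℝ)) *
          ((2 : ℝ) ^ j * x ⟨2, by omega⟩ - (k ⟨2, by omega⟩ : ℝ)) *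
          (1 + (4 : ℝ) ^ (j + 1) * s) ^ (-((n : ℝ) / 2 + 2)) *
          Real.exp (-(∑ i, ((2 : ℝ) ^ j * x i - (k i : ℝ)) ^ 2) / (1 + (4 : ℝ) ^ (j + 1) * s))) :
    ∀ x : Fin n → ℝ, 0 < x ⟨0, by omega⟩ →
      |W s (Function.update x ⟨0, by omega⟩ (x ⟨0, by omega⟩ + 3))| ≤ |W s x| := by
  subst hW
  intro x hx0
  set i0 : Fin n := ⟨0, by omega⟩ with hi0
  set i1 : Fin n := ⟨1, by omega⟩ with hi1
  set i2 : Fin n := ⟨2, by omega⟩ with hi2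
  have h01 : i0 ≠ i1 := by simp [hi0, hi1, Fin.ext_iff]
  have h02 : i0 ≠ i2 := by simp [hi0, hi2, Fin.ext_iff]
  have h12 : i1 ≠ i2 := by simp [hi1, hi2, Fin.ext_iff]
  set c : ℝ := 1 + (4 : ℝ) ^ (j + 1) * s with hc
  have hcpos : 0 < c := by positivity
  set C : ℝ := (2 : ℝ) ^ j * (j : ℝ) ^ (-(1 : ℝ) / 2) * c ^ (-((n : ℝ) / 2 + 2)) with hC
  set B : Finset ℤ := Finset.Icc ((2 : ℤ) ^ j) ((2 : ℤ) ^ (j + 1)) with hB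
  set F : Fin n → ℝ → ℤ → ℝ := fun i t m =>
    (if i = i1 ∨ i = i2 then (2 : ℝ) ^ j * t - (m : ℝ) else 1) *
      Real.exp (-((2 : ℝ) ^ j * t - (m : ℝ)) ^ 2 / c) with hF
  -- factorization of the sum
  have key : ∀ y : Fin n → ℝ,
      (∑ k ∈ Finset.Icc (fun _ : Fin n => (2 : ℤ) ^ j) (fun _ : Fin n => (2 : ℤ) ^ (j + 1)),
        (2 : ℝ) ^ j * (j : ℝ) ^ (-(1 : ℝ) / 2) *
          ((2 : ℝ) ^ j * y i1 - (k i1 : ℝ)) *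
          ((2 : ℝ) ^ j * y i2 - (k i2 : ℝ)) *
          c ^ (-((n : ℝ) / 2 + 2)) *
          Real.exp (-(∑ i, ((2 : ℝ) ^ j * y i - (k i : ℝ)) ^ 2) / c))
      = C * ∏ i, ∑ m ∈ B, F i (y i) m := by
    intro y
    rw [Finset.prod_univ_sum]
    rw [Pi.Icc_eq, Finset.mul_sum]
    apply Finset.sum_congr rfl
    intro k _
    have hexp : (∏ i, Real.exp (-((2 : ℝ) ^ j * y i - (k i : ℝ)) ^ 2 / c))
        = Real.exp (-(∑ i, ((2 : ℝ) ^ j * y i - (k i : ℝ)) ^ 2) / c) := by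
      rw [← Real.exp_sum]
      congr 1
      simp [neg_div, Finset.sum_div]
    have hite : (∏ i, (if i = i1 ∨ i = i2 then (2 : ℝ) ^ j * y i - (k i : ℝ) else 1))
        = ((2 : ℝ) ^ j * y i1 - (k i1 : ℝ)) * ((2 : ℝ) ^ j * y i2 - (k i2 : ℝ)) := by
      rw [← Finset.prod_subset (Finset.subset_univ ({i1, i2} : Finset (Fin n)))
        (by intro i _ hi
            simp only [Finset.mem_insert, Finset.mem_singleton] at hi
            rw [if_neg hi])]
      rw [Finset.prod_insert (by simp [h12]), Finset.prod_singleton]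
      rw [if_pos (Or.inl rfl), if_pos (Or.inr rfl)]
    calc (2 : ℝ) ^ j * (j : ℝ) ^ (-(1 : ℝ) / 2) *
          ((2 : ℝ) ^ j * y i1 - (k i1 : ℝ)) *
          ((2 : ℝ) ^ j * y i2 - (k i2 : ℝ)) *
          c ^ (-((n : ℝ) / 2 + 2)) *
          Real.exp (-(∑ i, ((2 : ℝ) ^ j * y i - (k i : ℝ)) ^ 2) / c)
        = C * ((∏ i, (if i = i1 ∨ i = i2 then (2 : ℝ) ^ j * y i - (k i : ℝ) else 1)) *
            ∏ i, Real.exp (-((2 : ℝ) ^ j * y i - (k i : ℝ)) ^ 2 / c)) := by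
          rw [hexp, hite, hC]; ring
      _ = C * ∏ i, F i (y i) (k i) := by rw [← Finset.prod_mul_distrib]
  set v : ℝ := x i0 + 3 with hv
  beta_reduce
  rw [key (Function.update x i0 v), key x]
  -- split off the i0 factor
  set S : Fin n → ℝ → ℝ := fun i t => ∑ m ∈ B, F i t m with hS
  have hsplit : ∀ y : Fin n → ℝ,
      (∏ i, S i (y i)) = S i0 (y i0) * ∏ i ∈ Finset.univ \ {i0}, S i (y i) := fun y =>
    Finset.prod_eq_mul_prod_sdiff_singleton_of_mem (Finset.mem_univ i0) _
  have hrest : (∏ i ∈ Finset.univ \ {i0}, S i (Function.update x i0 v i))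
      = ∏ i ∈ Finset.univ \ {i0}, S i (x i) := by
    apply Finset.prod_congr rfl
    intro i hi
    simp only [Finset.mem_sdiff, Finset.mem_singleton] at hi
    rw [Function.update_of_ne hi.2]
  rw [hsplit (Function.update x i0 v), hsplit x, hrest, Function.update_self]
  -- S i0 is a sum of exponentials
  have hSi0 : ∀ t : ℝ, S i0 t = ∑ m ∈ B, Real.exp (-((2 : ℝ) ^ j * t - (m : ℝ)) ^ 2 / c) := by
    intro t
    apply Finset.sum_congr rfl
    intro m _
    rw [hF]
    simp only [if_neg (by push_neg; exact ⟨h01, h02⟩ : ¬(i0 = i1 ∨ i0 = i2)), one_mul]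
  have hSnonneg : ∀ t : ℝ, 0 ≤ S i0 t := by
    intro t
    rw [hSi0]
    exact Finset.sum_nonneg fun m _ => (Real.exp_pos _).le
  -- the key inequality
  have hmono : S i0 v ≤ S i0 (x i0) := by
    rw [hSi0, hSi0]
    have hrefl : (∑ m ∈ B, Real.exp (-((2 : ℝ) ^ j * v - (m : ℝ)) ^ 2 / c))
        = ∑ m ∈ B, Real.exp (-((2 : ℝ) ^ j * x i0 + (m : ℝ)) ^ 2 / c) := by
      apply Finset.sum_nbij' (fun m => 3 * 2 ^ j - m) (fun m => 3 * 2 ^ j - m)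
      · intro m hm
        rw [hB, Finset.mem_Icc] at hm ⊢
        constructor
        · have : (2 : ℤ) ^ (j + 1) = 2 * 2 ^ j := by ring
          omega
        · have : (2 : ℤ) ^ (j + 1) = 2 * 2 ^ j := by ring
          omega
      · intro m hm
        rw [hB, Finset.mem_Icc] at hm ⊢
        have : (2 : ℤ) ^ (j + 1) = 2 * 2 ^ j := by ring
        omega
      · intro m _; ring
      · intro m _; ring
      · intro m _
        congr 2
        push_cast
        rw [hv]
        ring
    rw [hrefl]
    apply Finset.sum_le_sum
    intro m hm
    rw [hB, Finset.mem_Icc] at hm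
    have hm' : (0 : ℝ) < (m : ℝ) := by
      have : (0 : ℤ) < m := lt_of_lt_of_le (by positivity) hm.1
      exact_mod_cast this
    apply Real.exp_le_exp.mpr
    have hsq : ((2:ℝ)^j * x i0 - (m:ℝ))^2 ≤ ((2:ℝ)^j * x i0 + (m:ℝ))^2 := by
      nlinarith [mul_pos (mul_pos (pow_pos (by norm_num : (0:ℝ) < 2) j) hx0) hm']
    rw [div_le_div_iff₀ hcpos hcpos]
    nlinarith [mul_le_mul_of_nonneg_right hsq hcpos.le]
  -- conclude
  rw [abs_mul C (S i0 v * _), abs_mul (S i0 v), abs_mul C (S i0 (x i0) * _),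
      abs_mul (S i0 (x i0))]
  have h1 : |S i0 v| ≤ |S i0 (x i0)| := by
    rw [abs_of_nonneg (hSnonneg v), abs_of_nonneg (hSnonneg (x i0))]
    exact hmono
  exact mul_le_mul_of_nonneg_left (mul_le_mul_of_nonneg_right h1 (abs_nonneg _)) (abs_nonneg _)
end
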